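/- Let P be a finite metacyclic 2-group and let Q be a normal subgroup of P with Q isomorphic to C_{2^k} × C_{2^k} for some k ≥ 1, such that |P : Q| = 2 and the conjugation action of P/Q on Q/Φ(Q) is faithful. Then the quotient P/Φ(Q) is isomorphic to the dihedral group of order 8. -/

import Mathlib

/-!
Write `F` for the image of `Φ(Q)` in `P` and `V = Q/Φ(Q)` for the image of `Q` in `P/F`.
In a finite `p`-group maximal subgroups are normal of index `p`, so `p`-th powers lie in the
Frattini subgroup; hence `V` has exponent two, and being generated by the images of the two
generators of `Q` it has at most four elements. Faithfulness gives `t` acting nontrivially on `V`,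
so `V` has a third element and is a Klein four-group, normal of index two in the group `P/F` of
order eight. One of `t`, `t a` (for `a` moved by `t`) is an element `r` of order four, and
`a r a = r⁻¹`, so `P/F` is dihedral.
-/

/-- A group is *metacyclic* if it has a cyclic normal subgroup with cyclic quotient. -/
def IsMetacyclic (P : Type*) [Group P] : Prop :=
  ∃ (N : Subgroup P) (hN : N.Normal), IsCyclic N ∧
    letI := hN
    IsCyclic (P ⧸ N)

/-- A group is *homocyclic* if it is a direct product of two isomorphic cyclic groups. -/
def IsHomocyclic (P : Type*) [Group P] : Prop :=
  ∃ n : ℕ, Nonempty (P ≃* (Multiplicative (ZMod n) × Multiplicative (ZMod n)))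

/-- A finite `2`-group of order `2 ^ n` has *maximal class* if its nilpotency class is `n - 1`;
these are exactly the dihedral, semidihedral and generalized quaternion groups of order
at least `8` (so `n ≥ 3`).  The nilpotency class equals `n - 1` iff the `(n-1)`-st term of the
lower central series is trivial while the `(n-2)`-nd is not. -/
def IsMaximalClassTwoGroup (P : Type*) [Group P] : Prop :=
  ∃ n : ℕ, 3 ≤ n ∧ Nat.card P = 2 ^ n ∧
    (⊤ : Subgroup P).lowerCentralSeries (n - 1) = ⊥ ∧ (⊤ : Subgroup P).lowerCentralSeries (n - 2) ≠ ⊥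

/-- A group is *2-nilpotent* if it has a normal subgroup of odd order whose quotient
is a `2`-group (a normal `2`-complement). -/
def IsTwoNilpotent (G : Type*) [Group G] : Prop :=
  ∃ (N : Subgroup G) (hN : N.Normal), Odd (Nat.card N) ∧
    letI := hN
    IsPGroup 2 (G ⧸ N)

open Subgroup

theorem IsPGroup.index_eq_of_isCoatom {p : ℕ} [hp : Fact p.Prime] {G : Type*} [Group G]
    [Finite G] (hG : IsPGroup p G) {M : Subgroup G} (hM : IsCoatom M) : M.index = p := by
  obtain ⟨n, hn⟩ := (hG.to_subgroup M).exists_card_eq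
  obtain ⟨N, hN⟩ := hG.exists_card_eq
  obtain ⟨j, -, hj⟩ := (Nat.dvd_prime_pow hp.out).mp (hN ▸ M.index_dvd_card)
  have hj0 : j ≠ 0 := by
    rintro rfl
    exact hM.1 (index_eq_one.mp hj)
  have hdvd : p ^ (n + 1) ∣ Nat.card G := by
    rw [← M.card_mul_index, hn, hj, pow_succ]
    exact mul_dvd_mul_left _ (dvd_pow_self p hj0)
  obtain ⟨K, hK, hMK⟩ := Sylow.exists_subgroup_card_pow_succ hdvd hn
  have hKM : K ≠ M := fun h => by
    rw [h, hn] at hK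
    exact (Nat.pow_lt_pow_succ hp.out.one_lt).ne hK
  have hKtop : K = ⊤ := hM.2 K (lt_of_le_of_ne hMK hKM.symm)
  have hcard := M.card_mul_index
  rw [hn, ← card_top (G := G), ← hKtop, hK, pow_succ] at hcard
  exact (Nat.eq_of_mul_eq_mul_left (pow_pos hp.out.pos n) hcard)

theorem IsPGroup.pow_mem_frattini {p : ℕ} [Fact p.Prime] {G : Type*} [Group G] [Finite G]
    (hG : IsPGroup p G) (g : G) : g ^ p ∈ frattini G := by
  simp only [frattini, Order.radical, mem_iInf]
  intro M hM
  have : M.Normal := NormalizerCondition.normal_of_coatom M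
    (Group.normalizerCondition_of_isNilpotent (h := hG.isNilpotent)) hM
  simpa [hG.index_eq_of_isCoatom hM] using M.pow_index_mem g

theorem IsKleinFour.of_mul_self_eq_one {H : Type*} [Group H] (hsq : ∀ x : H, x * x = 1)
    (h2 : 2 < Nat.card H) (h4 : Nat.card H ≤ 4) : IsKleinFour H := by
  have : Finite H := Nat.finite_of_card_ne_zero (by omega)
  have : Nontrivial H := (Finite.one_lt_card_iff_nontrivial).mp (by omega)
  have hH : IsPGroup 2 H := fun x => ⟨1, by rw [pow_one, sq, hsq]⟩
  obtain ⟨m, hm⟩ := hH.exists_card_eq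
  have hm3 : m < 3 := (Nat.pow_lt_pow_iff_right (a := 2) (by norm_num)).mp (by omega)
  refine ⟨?_, (Monoid.exponent_eq_prime_iff Nat.prime_two).mpr
    fun x hx => orderOf_eq_prime (by rw [sq, hsq]) hx⟩
  interval_cases m <;> simp_all

theorem Subgroup.two_lt_card_of_conj_ne {G : Type*} [Group G] {V : Subgroup G} [V.Normal]
    [Finite V] {t a : G} (ha : a ∈ V) (hta : t * a * t⁻¹ ≠ a) : 2 < Nat.card V := by
  classical
  have := Fintype.ofFinite V
  rw [Nat.card_eq_fintype_card, Fintype.two_lt_card_iff]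
  refine ⟨1, ⟨a, ha⟩, ⟨t * a * t⁻¹, Normal.conj_mem ‹_› a ha t⟩, ?_, ?_, ?_⟩ <;>
    simp only [ne_eq, Subtype.ext_iff, coe_one] <;> rintro h
  · exact hta (by rw [← h]; group)
  · have h1 : a = 1 := conj_eq_one_iff.mp h.symm
    simp [h1] at hta
  · exact hta h.symm

theorem zpow_eq_one_or_self_of_mul_self {G : Type*} [Group G] {w : G} (hw : w * w = 1) (m : ℤ) :
    w ^ m = 1 ∨ w ^ m = w := by
  obtain ⟨k, rfl | rfl⟩ := Int.even_or_odd' m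
  · left; rw [zpow_mul, zpow_two, hw, one_zpow]
  · right; rw [zpow_add_one, zpow_mul, zpow_two, hw, one_zpow, one_mul]

theorem MonoidHom.card_range_le_four {C G : Type*} [Group C] [IsCyclic C] [Group G]
    (f : C × C →* G) (hf : ∀ x, f x * f x = 1) : Nat.card f.range ≤ 4 := by
  classical
  obtain ⟨g, hg⟩ := IsCyclic.exists_generator (α := C)
  set u := f (g, 1)
  set v := f (1, g)
  have hsub : (f.range : Set G) ⊆ ({1, u, v, u * v} : Finset G) := by
    rintro _ ⟨⟨x₁, x₂⟩, rfl⟩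
    obtain ⟨m, rfl⟩ := mem_zpowers_iff.mp (hg x₁)
    obtain ⟨n, rfl⟩ := mem_zpowers_iff.mp (hg x₂)
    have hx : f (g ^ m, g ^ n) = u ^ m * v ^ n := by
      rw [← map_zpow, ← map_zpow, ← map_mul, Prod.pow_mk, Prod.pow_mk, one_zpow, one_zpow,
        Prod.mk_mul_mk, mul_one, one_mul]
    rcases zpow_eq_one_or_self_of_mul_self (w := u) (hf _) m with hu | hu <;>
      rcases zpow_eq_one_or_self_of_mul_self (w := v) (hf _) n with hv | hv <;>
      simp [hx, hu, hv]
  calc Nat.card f.range ≤ Nat.card (({1, u, v, u * v} : Finset G) : Set G) :=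
        Nat.card_mono (Finset.finite_toSet _) hsub
    _ ≤ 4 := by rw [Nat.card_coe_set_eq, Set.ncard_coe_finset]; exact Finset.card_le_four

namespace DihedralGroup

variable {G : Type*} [Group G] {n : ℕ} [NeZero n] {r s : G}

def lift (hr : r ^ n = 1) (hs : s * s = 1) (hsr : s * r * s⁻¹ = r⁻¹) :
    DihedralGroup n →* G where
  toFun
    | .r i => r ^ i.val
    | .sr i => s * r ^ i.val
  map_one' := by
    show r ^ (0 : ZMod n).val = 1
    rw [ZMod.val_zero, pow_zero]
  map_mul' := by
    have hadd (i j : ZMod n) : r ^ (i + j).val = r ^ i.val * r ^ j.val := by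
      rw [ZMod.val_add, ← pow_eq_pow_mod _ hr, pow_add]
    have hsub (i j : ZMod n) : r ^ (j - i).val = (r ^ i.val)⁻¹ * r ^ j.val := by
      rw [eq_inv_mul_iff_mul_eq, ← hadd, add_sub_cancel]
    have hs' : s⁻¹ = s := inv_eq_of_mul_eq_one_right hs
    have hconj (k : ℕ) : r ^ k * s = s * (r ^ k)⁻¹ := by
      rw [← inv_pow, ← hsr, conj_pow, hs', ← mul_assoc, ← mul_assoc, hs, one_mul]
    rintro (i | i) (j | j)
    · exact hadd i j
    · show s * r ^ (j - i).val = r ^ i.val * (s * r ^ j.val)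
      rw [hsub, ← mul_assoc, ← mul_assoc, hconj]
    · show s * r ^ (i + j).val = s * r ^ i.val * r ^ j.val
      rw [hadd, mul_assoc]
    · show r ^ (j - i).val = s * r ^ i.val * (s * r ^ j.val)
      rw [hsub, ← mul_assoc, mul_assoc s, hconj, ← mul_assoc, hs, one_mul]

theorem lift_injective (hr : r ^ n = 1) (hs : s * s = 1) (hsr : s * r * s⁻¹ = r⁻¹)
    (hr_order : orderOf r = n) (hs_mem : s ∉ zpowers r) :
    Function.Injective (lift hr hs hsr) := by
  rw [injective_iff_map_eq_one]
  rintro (i | i) h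
  · change r ^ i.val = 1 at h
    have hdvd : n ∣ i.val := by simpa [hr_order] using orderOf_dvd_of_pow_eq_one h
    rw [one_def, (ZMod.val_eq_zero i).mp (Nat.eq_zero_of_dvd_of_lt hdvd (ZMod.val_lt i))]
  · change s * r ^ i.val = 1 at h
    exact absurd (eq_inv_of_mul_eq_one_left h ▸ inv_mem (npow_mem_zpowers r i.val)) hs_mem

theorem nonempty_mulEquiv_of_card (hG : Nat.card G = 2 * n) (hr : orderOf r = n)
    (hs : s * s = 1) (hsr : s * r * s⁻¹ = r⁻¹) (hs_mem : s ∉ zpowers r) :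
    Nonempty (DihedralGroup n ≃* G) := by
  have hr' : r ^ n = 1 := hr ▸ pow_orderOf_eq_one r
  have : Finite G := Nat.finite_of_card_ne_zero (by simp [hG, NeZero.ne n])
  exact ⟨MulEquiv.ofBijective (lift hr' hs hsr)
    ((lift_injective hr' hs hsr hr hs_mem).bijective_of_nat_card_le (by rw [nat_card, hG]))⟩

end DihedralGroup

theorem exists_conj_eq_and_mul_self_ne_one {G : Type*} [Group G] {t a : G} (ha : a * a = 1)
    (hta : t * a * t⁻¹ ≠ a) : ∃ r : G, r * a * r⁻¹ = t * a * t⁻¹ ∧ r * r ≠ 1 := by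
  by_cases ht : t * t = 1
  · refine ⟨t * a, by group, fun h => hta ?_⟩
    rw [show t * a * (t * a) = t * a * t⁻¹ * (t * t) * a by group, ht, mul_one] at h
    exact (eq_inv_of_mul_eq_one_left h).trans (inv_eq_of_mul_eq_one_right ha)
  · exact ⟨t, rfl, ht⟩

theorem nonempty_mulEquiv_dihedralGroup_four_of_isKleinFour {G : Type*} [Group G]
    (V : Subgroup G) [V.Normal] [IsKleinFour V] (hV : V.index = 2) {t a : G} (ha : a ∈ V)
    (hta : t * a * t⁻¹ ≠ a) : Nonempty (G ≃* DihedralGroup 4) := by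
  have hmul_self : ∀ v ∈ V, v * v = 1 := fun v hv =>
    congrArg Subtype.val (IsKleinFour.mul_self (⟨v, hv⟩ : V))
  have hcomm : ∀ u ∈ V, ∀ v ∈ V, u * v = v * u := fun u hu v hv =>
    congrArg Subtype.val (mul_comm_of_exponent_two IsKleinFour.exponent_two ⟨u, hu⟩ ⟨v, hv⟩)
  obtain ⟨r, hra, hrr1⟩ := exists_conj_eq_and_mul_self_ne_one (hmul_self a ha) hta
  obtain ⟨b, hb_def⟩ : ∃ b, t * a * t⁻¹ = b := ⟨_, rfl⟩
  have hb : b ∈ V := hb_def ▸ Normal.conj_mem ‹_› a ha t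
  rw [hb_def] at hta hra
  have hrr : r * r ∈ V := mul_self_mem_of_index_two hV r
  have hrb : r * b * r⁻¹ = a := by
    rw [← hra, show r * (r * a * r⁻¹) * r⁻¹ = r * r * a * (r * r)⁻¹ by group,
      hcomm _ hrr a ha, mul_inv_cancel_right]
  have ha1 : a ≠ 1 := by rintro rfl; exact hta (by simpa using hra.symm)
  have hb1 : b ≠ 1 := fun h => ha1 (conj_eq_one_iff.mp (hra.trans h))
  -- `r * r` is fixed by conjugation by `r`, which swaps `a` and `b`
  have hr_fix : r * (r * r) * r⁻¹ = r * r := by group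
  have hrra : r * r ≠ a := fun h => hta (by rw [← hra, ← h, hr_fix])
  have hrrb : r * r ≠ b := fun h => hta (by rw [← hrb, ← h, hr_fix])
  have hr2 : r * r = a * b := congrArg Subtype.val <| IsKleinFour.eq_mul_of_ne_all
    (x := (⟨a, ha⟩ : V)) (y := ⟨b, hb⟩) (z := ⟨r * r, hrr⟩) (by simpa using ha1)
    (by simpa using hb1) (by simpa using hta.symm) (by simpa using hrr1) (by simpa using hrra)
    (by simpa using hrrb)
  have hr_order : orderOf r = 4 := orderOf_eq_prime_pow (p := 2) (n := 1) (by rwa [pow_one, sq])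
    (by rw [show 2 ^ (1 + 1) = 2 * 2 by rfl, pow_mul, sq, sq, hr2]
        exact hmul_self _ (mul_mem ha hb))
  have hsr : a * r * a⁻¹ = r⁻¹ := by
    refine eq_inv_of_mul_eq_one_left ?_
    rw [inv_eq_of_mul_eq_one_right (hmul_self a ha),
      show a * r * a * r = a * (r * a * r⁻¹) * (r * r) by group, hra, hr2]
    exact hmul_self _ (mul_mem ha hb)
  have hs_mem : a ∉ zpowers r := by
    intro h
    obtain ⟨k, rfl⟩ := mem_zpowers_iff.mp h
    exact hta (by rw [← hra, (Commute.self_zpow r k).eq, mul_inv_cancel_right])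
  have hcard : Nat.card G = 2 * 4 := by
    rw [← V.card_mul_index, hV, IsKleinFour.card_four]
  obtain ⟨e⟩ :=
    DihedralGroup.nonempty_mulEquiv_of_card hcard hr_order (hmul_self a ha) hsr hs_mem
  exact ⟨e.symm⟩

theorem quotient_frattini_dihedral_general (P : Type*) [Group P] [Finite P]
    (h2 : IsPGroup 2 P)
    (Q : Subgroup P) [Q.Normal] (k : ℕ)
    (hQ : Nonempty (↥Q ≃* (Multiplicative (ZMod (2 ^ k)) × Multiplicative (ZMod (2 ^ k)))))
    (hidx : Q.index = 2)
    (hfaithful : ∀ x : P,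
      (∀ q ∈ Q, x * q * x⁻¹ * q⁻¹ ∈ (frattini ↥Q).map Q.subtype) → x ∈ Q) :
    Nonempty ((P ⧸ (frattini ↥Q).map Q.subtype) ≃* DihedralGroup 4) := by
  set F := (frattini ↥Q).map Q.subtype
  obtain ⟨e⟩ := hQ
  let ψ := (QuotientGroup.mk' F).comp (Q.subtype.comp e.symm.toMonoidHom)
  have hψ : ψ.range = Q.map (QuotientGroup.mk' F) := by
    simp [ψ, MonoidHom.range_comp, ← MonoidHom.range_eq_map]
  set V := Q.map (QuotientGroup.mk' F)
  have hV : V.index = 2 := by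
    rw [index_map_eq Q (QuotientGroup.mk'_surjective F)
      ((QuotientGroup.ker_mk' F).le.trans (map_subtype_le _)), hidx]
  have hF_sq : ∀ q ∈ Q, ((q * q : P) : P ⧸ F) = 1 := fun q hq =>
    (QuotientGroup.eq_one_iff _).mpr
      ⟨⟨q, hq⟩ ^ 2, (h2.to_subgroup Q).pow_mem_frattini _, by simp [sq]⟩
  have hV_sq : ∀ v : V, v * v = 1 := by
    rintro ⟨_, q, hq, rfl⟩
    exact Subtype.ext (hF_sq q hq)
  have hψ_sq : ∀ x, ψ x * ψ x = 1 := fun x => hF_sq _ (e.symm x).2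
  obtain ⟨t, -, ht⟩ := SetLike.exists_of_lt
    (lt_top_iff_ne_top.mpr (index_eq_one.not.mp (by rw [hidx]; decide)))
  obtain ⟨a, haQ, hta⟩ : ∃ a ∈ Q, t * a * t⁻¹ * a⁻¹ ∉ F := by
    by_contra! h
    exact ht (hfaithful t h)
  have hta' : (t : P ⧸ F) * a * (t : P ⧸ F)⁻¹ ≠ a := fun h =>
    hta ((QuotientGroup.eq_one_iff _).mp
      (by simp only [QuotientGroup.mk_mul, QuotientGroup.mk_inv, h, mul_inv_cancel]))
  have ha : (a : P ⧸ F) ∈ V := mem_map_of_mem _ haQ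
  have : IsKleinFour V := IsKleinFour.of_mul_self_eq_one hV_sq (two_lt_card_of_conj_ne ha hta')
    (hψ ▸ ψ.card_range_le_four hψ_sq)
  exact nonempty_mulEquiv_dihedralGroup_four_of_isKleinFour V hV ha hta'

/-- Let `P` be a finite metacyclic 2-group with a normal subgroup `Q ≅ C_{2^k} × C_{2^k}`
(`k ≥ 1`) of index 2 such that the conjugation action of `P/Q` on `Q/Φ(Q)` is faithful
(any element of `P` acting trivially on `Q/Φ(Q)` lies in `Q`).  Then `P/Φ(Q)` is a dihedral
group of order 8. -/
theorem quotient_frattini_dihedral (P : Type*) [Group P] [Finite P]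
    (h2 : IsPGroup 2 P) (hmeta : IsMetacyclic P)
    (Q : Subgroup P) [Q.Normal] (k : ℕ) (hk : 1 ≤ k)
    (hQ : Nonempty (↥Q ≃* (Multiplicative (ZMod (2 ^ k)) × Multiplicative (ZMod (2 ^ k)))))
    (hidx : Q.index = 2)
    (hfaithful : ∀ x : P,
      (∀ q ∈ Q, x * q * x⁻¹ * q⁻¹ ∈ (frattini ↥Q).map Q.subtype) → x ∈ Q) :
    Nonempty ((P ⧸ (frattini ↥Q).map Q.subtype) ≃* DihedralGroup 4) :=
  quotient_frattini_dihedral_general P h2 Q k hQ hidx hfaithful
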